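/- arXiv:2305.07386 — 2 statements merged into one kernel-verified Lean document; each statement's English description precedes it below -/
import Mathlib

section
/- With the setup of a bipartite graph B ∈ ℝ^{N×M} with nonnegative entries and partitions (𝕊_1,𝔸_1),…,(𝕊_k,𝔸_k) of the sample set 𝕊 (|𝕊|=N) and anchor set 𝔸 (|𝔸|=M) into nonempty parts, for each cluster i one has: cut(𝕊_i, ∪_{j≠i} 𝔸_j)/|𝕊_i| + cut(∪_{j≠i} 𝕊_j, 𝔸_i)/|𝔸_i| + cut(𝕊_i, 𝔸_i)·(1/√|𝕊_i| − 1/√|𝔸_i|)^2 = Σ_{n=1}^N Σ_{m=1}^M b_{nm} (Ȳ_N(n,i) − Ȳ_M(m,i))^2. -/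
open Matrix BigOperators
open scoped Classical

theorem stmt_6 (N M k : ℕ) (B : Matrix (Fin N) (Fin M) ℝ)
    (hB : ∀ n m, 0 ≤ B n m)
    (cS : Fin N → Fin k) (hS : Function.Surjective cS)
    (cA : Fin M → Fin k) (hA : Function.Surjective cA)
    (YN : Matrix (Fin N) (Fin k) ℝ)
    (hYN : ∀ n j, YN n j = if cS n = j then
        (Real.sqrt ((Finset.univ.filter fun n' => cS n' = j).card))⁻¹ else 0)
    (YM : Matrix (Fin M) (Fin k) ℝ)
    (hYM : ∀ m j, YM m j = if cA m = j then
        (Real.sqrt ((Finset.univ.filter fun m' => cA m' = j).card))⁻¹ else 0)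
    (i : Fin k) :
    (∑ n ∈ Finset.univ.filter fun n => cS n = i,
        ∑ m ∈ Finset.univ.filter fun m => cA m ≠ i, B n m) /
      ((Finset.univ.filter fun n => cS n = i).card : ℝ) +
    (∑ n ∈ Finset.univ.filter fun n => cS n ≠ i,
        ∑ m ∈ Finset.univ.filter fun m => cA m = i, B n m) /
      ((Finset.univ.filter fun m => cA m = i).card : ℝ) +
    (∑ n ∈ Finset.univ.filter fun n => cS n = i,
        ∑ m ∈ Finset.univ.filter fun m => cA m = i, B n m) *
      ((Real.sqrt ((Finset.univ.filter fun n => cS n = i).card))⁻¹ -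
        (Real.sqrt ((Finset.univ.filter fun m => cA m = i).card))⁻¹) ^ 2 =
    ∑ n, ∑ m, B n m * (YN n i - YM m i) ^ 2 := by

  set nS := (Finset.univ.filter fun n => cS n = i).card with hnSdef
  set nA := (Finset.univ.filter fun m => cA m = i).card with hnAdef
  have hnS : 0 < nS := by
    obtain ⟨n, hn⟩ := hS i
    exact Finset.card_pos.mpr ⟨n, by simp [hn]⟩
  have hnA : 0 < nA := by
    obtain ⟨m, hm⟩ := hA i
    exact Finset.card_pos.mpr ⟨m, by simp [hm]⟩
  set a : ℝ := (Real.sqrt nS)⁻¹ with ha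
  set b : ℝ := (Real.sqrt nA)⁻¹ with hb
  have ha2 : a ^ 2 = (nS : ℝ)⁻¹ := by
    rw [ha, inv_pow, Real.sq_sqrt (by positivity)]
  have hb2 : b ^ 2 = (nA : ℝ)⁻¹ := by
    rw [hb, inv_pow, Real.sq_sqrt (by positivity)]
  have hsplit : ∀ f : Fin N → ℝ, ∑ n, f n =
      (∑ n ∈ Finset.univ.filter fun n => cS n = i, f n) +
      ∑ n ∈ Finset.univ.filter fun n => ¬ cS n = i, f n := fun f =>
    (Finset.sum_filter_add_sum_filter_not Finset.univ _ f).symm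
  have hsplitM : ∀ f : Fin M → ℝ, ∑ m, f m =
      (∑ m ∈ Finset.univ.filter fun m => cA m = i, f m) +
      ∑ m ∈ Finset.univ.filter fun m => ¬ cA m = i, f m := fun f =>
    (Finset.sum_filter_add_sum_filter_not Finset.univ _ f).symm
  rw [hsplit]
  have h1 : ∀ n ∈ Finset.univ.filter fun n => cS n = i,
      (∑ m, B n m * (YN n i - YM m i) ^ 2) =
      (∑ m ∈ Finset.univ.filter fun m => cA m = i, B n m) * (a - b) ^ 2 +
      (∑ m ∈ Finset.univ.filter fun m => ¬ cA m = i, B n m) * a ^ 2 := by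
    intro n hn
    rw [Finset.mem_filter] at hn
    rw [hsplitM]
    congr 1
    · rw [Finset.sum_mul]
      apply Finset.sum_congr rfl
      intro m hm
      rw [Finset.mem_filter] at hm
      rw [hYN, hYM, if_pos hn.2, if_pos hm.2]
    · rw [Finset.sum_mul]
      apply Finset.sum_congr rfl
      intro m hm
      rw [Finset.mem_filter] at hm
      rw [hYN, hYM, if_pos hn.2, if_neg hm.2, sub_zero]
  have h2 : ∀ n ∈ Finset.univ.filter fun n => ¬ cS n = i,
      (∑ m, B n m * (YN n i - YM m i) ^ 2) =
      (∑ m ∈ Finset.univ.filter fun m => cA m = i, B n m) * b ^ 2 := by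
    intro n hn
    rw [Finset.mem_filter] at hn
    rw [hsplitM]
    have : (∑ m ∈ Finset.univ.filter fun m => ¬ cA m = i,
        B n m * (YN n i - YM m i) ^ 2) = 0 := by
      apply Finset.sum_eq_zero
      intro m hm
      rw [Finset.mem_filter] at hm
      rw [hYN, hYM, if_neg hn.2, if_neg hm.2]
      ring
    rw [this, add_zero, Finset.sum_mul]
    apply Finset.sum_congr rfl
    intro m hm
    rw [Finset.mem_filter] at hm
    rw [hYN, hYM, if_neg hn.2, if_pos hm.2]
    ring
  rw [Finset.sum_congr rfl h1, Finset.sum_congr rfl h2,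
    Finset.sum_add_distrib, ← Finset.sum_mul, ← Finset.sum_mul, ← Finset.sum_mul,
    ha2, hb2]
  rw [div_eq_mul_inv, div_eq_mul_inv]
  ring
end

section
/- Let B ∈ ℝ^{N×M} be nonnegative and let (𝕊_1,𝔸_1),…,(𝕊_k,𝔸_k) be partitions of the sample set and anchor set into nonempty parts. Define BipartiteGraphCut = Σ_{i=1}^k [ cut(𝕊_i, ∪_{j≠i}𝔸_j)/|𝕊_i| + cut(∪_{j≠i}𝕊_j, 𝔸_i)/|𝔸_i| + cut(𝕊_i,𝔸_i)(1/√|𝕊_i| − 1/√|𝔸_i|)^2 − Σ_{n∈𝕊_i} D_N(n,n)/|𝕊_i| − Σ_{m∈𝔸_i} D_M(m,m)/|𝔸_i| ]. Then BipartiteGraphCut = −2·Tr(Ȳ_N^T B Ȳ_M), where Ȳ_N, Ȳ_M are the corresponding normalized indicator matrices. Hence minimizing BipartiteGraphCut over partitions is equivalent to maximizing Tr(Ȳ_N^T B Ȳ_M). -/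
open Matrix BigOperators
open scoped Classical

theorem stmt_7 (N M k : ℕ) (B : Matrix (Fin N) (Fin M) ℝ)
    (hB : ∀ n m, 0 ≤ B n m)
    (cS : Fin N → Fin k) (hS : Function.Surjective cS)
    (cA : Fin M → Fin k) (hA : Function.Surjective cA)
    (YN : Matrix (Fin N) (Fin k) ℝ)
    (hYN : ∀ n j, YN n j = if cS n = j then
        (Real.sqrt ((Finset.univ.filter fun n' => cS n' = j).card))⁻¹ else 0)
    (YM : Matrix (Fin M) (Fin k) ℝ)
    (hYM : ∀ m j, YM m j = if cA m = j then
        (Real.sqrt ((Finset.univ.filter fun m' => cA m' = j).card))⁻¹ else 0) :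
    (∑ i : Fin k,
      ((∑ n ∈ Finset.univ.filter fun n => cS n = i,
          ∑ m ∈ Finset.univ.filter fun m => cA m ≠ i, B n m) /
        ((Finset.univ.filter fun n => cS n = i).card : ℝ) +
       (∑ n ∈ Finset.univ.filter fun n => cS n ≠ i,
          ∑ m ∈ Finset.univ.filter fun m => cA m = i, B n m) /
        ((Finset.univ.filter fun m => cA m = i).card : ℝ) +
       (∑ n ∈ Finset.univ.filter fun n => cS n = i,
          ∑ m ∈ Finset.univ.filter fun m => cA m = i, B n m) *
        ((Real.sqrt ((Finset.univ.filter fun n => cS n = i).card))⁻¹ -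
          (Real.sqrt ((Finset.univ.filter fun m => cA m = i).card))⁻¹) ^ 2 -
       (∑ n ∈ Finset.univ.filter fun n => cS n = i, ∑ m, B n m) /
        ((Finset.univ.filter fun n => cS n = i).card : ℝ) -
       (∑ m ∈ Finset.univ.filter fun m => cA m = i, ∑ n, B n m) /
        ((Finset.univ.filter fun m => cA m = i).card : ℝ))) =
    -2 * Matrix.trace (YNᵀ * B * YM) := by
  have htr : Matrix.trace (YNᵀ * B * YM) =
      ∑ j : Fin k,
        (Real.sqrt ((Finset.univ.filter fun n => cS n = j).card))⁻¹ *
        (Real.sqrt ((Finset.univ.filter fun m => cA m = j).card))⁻¹ *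
        (∑ n ∈ Finset.univ.filter fun n => cS n = j,
          ∑ m ∈ Finset.univ.filter fun m => cA m = j, B n m) := by
    have hdiag : ∀ j, (YNᵀ * B * YM) j j = ∑ n, ∑ m, YN n j * B n m * YM m j := by
      intro j
      simp only [Matrix.mul_apply, Matrix.transpose_apply, Finset.sum_mul]
      rw [Finset.sum_comm]
    simp only [Matrix.trace, Matrix.diag]
    refine Finset.sum_congr rfl fun j _ => ?_
    rw [hdiag j]
    simp only [hYN, hYM, Finset.mul_sum, Finset.sum_filter]
    refine Finset.sum_congr rfl fun n _ => ?_
    by_cases h : cS n = j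
    · simp only [h, if_true]
      rw [Finset.mul_sum]
      refine Finset.sum_congr rfl fun m _ => ?_
      by_cases h2 : cA m = j <;> simp [h2] <;> ring
    · simp [h]
  rw [htr, Finset.mul_sum]
  refine Finset.sum_congr rfl fun j _ => ?_
  set s := (Finset.univ.filter fun n => cS n = j).card with hs
  set a := (Finset.univ.filter fun m => cA m = j).card with ha
  have hs0 : 0 < s := by
    obtain ⟨n, hn⟩ := hS j
    exact Finset.card_pos.2 ⟨n, by simp [hn]⟩
  have ha0 : 0 < a := by
    obtain ⟨m, hm⟩ := hA j
    exact Finset.card_pos.2 ⟨m, by simp [hm]⟩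
  set x := (Real.sqrt s)⁻¹ with hx
  set y := (Real.sqrt a)⁻¹ with hy
  have hx2 : ((s : ℝ))⁻¹ = x ^ 2 := by
    rw [hx, inv_pow, Real.sq_sqrt (by positivity)]
  have hy2 : ((a : ℝ))⁻¹ = y ^ 2 := by
    rw [hy, inv_pow, Real.sq_sqrt (by positivity)]
  set C := ∑ n ∈ Finset.univ.filter fun n => cS n = j,
      ∑ m ∈ Finset.univ.filter fun m => cA m = j, B n m with hC
  have h1 : (∑ n ∈ Finset.univ.filter fun n => cS n = j,
      ∑ m ∈ Finset.univ.filter fun m => cA m ≠ j, B n m)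
      = (∑ n ∈ Finset.univ.filter fun n => cS n = j, ∑ m, B n m) - C := by
    rw [hC, ← Finset.sum_sub_distrib]
    refine Finset.sum_congr rfl fun n _ => ?_
    rw [eq_sub_iff_add_eq, add_comm]
    exact Finset.sum_filter_add_sum_filter_not _ _ _
  have h2 : (∑ n ∈ Finset.univ.filter fun n => cS n ≠ j,
      ∑ m ∈ Finset.univ.filter fun m => cA m = j, B n m)
      = (∑ m ∈ Finset.univ.filter fun m => cA m = j, ∑ n, B n m) - C := by
    have hCswap : C = ∑ m ∈ Finset.univ.filter fun m => cA m = j,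
        ∑ n ∈ Finset.univ.filter fun n => cS n = j, B n m := by
      rw [hC]; rw [Finset.sum_comm]
    rw [Finset.sum_comm (s := Finset.univ.filter fun n => cS n ≠ j)
      (t := Finset.univ.filter fun m => cA m = j) (f := fun n m => B n m), hCswap, ← Finset.sum_sub_distrib]
    refine Finset.sum_congr rfl fun m _ => ?_
    rw [eq_sub_iff_add_eq, add_comm]
    exact Finset.sum_filter_add_sum_filter_not _ _ _
  rw [h1, h2, div_eq_mul_inv, div_eq_mul_inv, div_eq_mul_inv, div_eq_mul_inv,
    hx2, hy2]
  ring
end
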